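/- arXiv:1805.08522 — 4 statements merged into one kernel-verified Lean document; each statement's English description precedes it below -/
import Mathlib

section
/- PAC-Bayes theorem (Langford–Seeger form): For any probability distribution P on a finite concept space H, any probability distribution D on the instance space X, any integer m ≥ 2, and any 0 < δ ≤ 1, with probability at least 1 − δ over the choice of an i.i.d. sample S = (x_1, …, x_m) of m instances drawn from D, every probability distribution Q on H satisfies ε̂(Q)·ln(ε̂(Q)/ε(Q)) + (1 − ε̂(Q))·ln((1 − ε̂(Q))/(1 − ε(Q))) ≤ (KL(Q‖P) + ln(2m/δ))/(m − 1), with the conventions 0·ln 0 = 0 and that the left-hand side is +∞ when ε(Q) ∈ {0,1} and ε̂(Q) ≠ ε(Q). -/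
open MeasureTheory Finset

/-- Binary KL divergence (relative entropy between Bernoulli distributions), with the
conventions `0·ln 0 = 0` and value `⊤` when `p ∈ {0,1}` but `q ≠ p`. -/
noncomputable def klBin (q p : ℝ) : EReal :=
  if (p = 0 ∨ p = 1) ∧ q ≠ p then ⊤
  else (((if q = 0 then 0 else q * Real.log (q / p)) +
         (if q = 1 then 0 else (1 - q) * Real.log ((1 - q) / (1 - p)))) : ℝ)

/-- KL divergence between two distributions on a finite concept space, with the conventions
`0·ln(0/p) = 0` and value `⊤` if `Q c > 0` while `P c = 0` for some `c`. -/
noncomputable def klDiv {H : Type*} [Fintype H] (Q P : H → ℝ) : EReal :=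
  if ∃ c, P c = 0 ∧ Q c ≠ 0 then ⊤
  else ((∑ c, if Q c = 0 then 0 else Q c * Real.log (Q c / P c)) : ℝ)

open Real ProbabilityTheory
open scoped unitInterval

/-!
For a fixed concept `c` the number of sample errors is binomial with parameter `ε(c)`.
Comparing the binomial weight at `k` with its maximum over the parameter, attained at `k/m`,
gives `C(m,k) p^k (1-p)^(m-k) ≤ exp (-m·kl(k/m ‖ p))`, hence
`𝔼 exp ((m-1)·kl(ε̂(c) ‖ ε(c))) ≤ m + 1 ≤ 2m`. Averaging over the prior `P` and applying
Markov's inequality, with probability at least `1 - δ` the sample satisfies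
`∑ P(c) exp ((m-1)·kl(ε̂(c) ‖ ε(c))) ≤ 2m/δ`. On that event, for every posterior `Q`, joint
convexity of `kl` and the Donsker–Varadhan change of measure give
`(m-1)·kl(ε̂(Q) ‖ ε(Q)) ≤ ∑ Q(c) (m-1)·kl(ε̂(c) ‖ ε(c)) ≤ KL(Q‖P) + ln (2m/δ)`.
The samples on which some `kl(ε̂(c) ‖ ε(c))` is infinite form a null set.
-/

lemma mul_log_le_mul_log_div_add_mul_sub {a b c : ℝ} (ha : 0 ≤ a) (hb : 0 ≤ b)
    (hab : b = 0 → a = 0) (hc : 0 < c) :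
    a * log c ≤ a * log (a / b) + c * b - a := by
  rcases ha.eq_or_lt with rfl | ha
  · simpa using mul_nonneg hc.le hb
  have hb : 0 < b := hb.lt_of_ne fun h => ha.ne' (hab h.symm)
  have hlog : log (c * b / a) = log c - log (a / b) := by
    rw [show c * b / a = c / (a / b) by field_simp, log_div hc.ne' (by positivity)]
  have := mul_le_mul_of_nonneg_left (log_le_sub_one_of_pos (by positivity : 0 < c * b / a)) ha.le
  rw [hlog, mul_sub_one, mul_div_cancel₀ _ ha.ne'] at this
  linarith

lemma sum_mul_log_sum_div_sum_le {ι : Type*} (s : Finset ι) {a b : ι → ℝ}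
    (ha : ∀ i ∈ s, 0 ≤ a i) (hb : ∀ i ∈ s, 0 ≤ b i)
    (hab : ∀ i ∈ s, b i = 0 → a i = 0) :
    (∑ i ∈ s, a i) * log ((∑ i ∈ s, a i) / ∑ i ∈ s, b i) ≤
      ∑ i ∈ s, a i * log (a i / b i) := by
  set A := ∑ i ∈ s, a i
  set B := ∑ i ∈ s, b i
  rcases (sum_nonneg ha).eq_or_lt with hA | hA
  · have ha0 := (sum_eq_zero_iff_of_nonneg ha).1 hA.symm
    rw [show A = 0 from hA.symm, zero_mul]
    exact sum_nonneg fun i hi => by simp [ha0 i hi]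
  have hB : 0 < B := (sum_nonneg hb).lt_of_ne fun hB => hA.ne' <|
    sum_eq_zero fun i hi => hab i hi ((sum_eq_zero_iff_of_nonneg hb).1 hB.symm i hi)
  calc A * log (A / B) = ∑ i ∈ s, a i * log (A / B) := sum_mul ..
    _ ≤ ∑ i ∈ s, (a i * log (a i / b i) + A / B * b i - a i) :=
      sum_le_sum fun i hi =>
        mul_log_le_mul_log_div_add_mul_sub (ha i hi) (hb i hi) (hab i hi) (by positivity)
    _ = ∑ i ∈ s, a i * log (a i / b i) := by
      rw [sum_sub_distrib, sum_add_distrib, ← mul_sum, div_mul_cancel₀ _ hB.ne',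
        add_sub_cancel_right]

/-- Since `Real.log 0 = 0`, this agrees with `klBin q p` whenever the latter is finite. -/
noncomputable def klBinReal (q p : ℝ) : ℝ :=
  q * log (q / p) + (1 - q) * log ((1 - q) / (1 - p))

lemma klBin_eq_coe_klBinReal {q p : ℝ} (h0 : p = 0 → q = 0) (h1 : p = 1 → q = 1) :
    klBin q p = klBinReal q p := by
  rw [klBin, if_neg (by rintro ⟨hp | hp, hqp⟩ <;> simp_all), klBinReal]
  congr 2 <;> split_ifs <;> simp_all

lemma klBinReal_nonneg {q p : ℝ} (hq0 : 0 ≤ q) (hq1 : q ≤ 1) (hp0 : 0 ≤ p) (hp1 : p ≤ 1)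
    (h0 : p = 0 → q = 0) (h1 : p = 1 → q = 1) : 0 ≤ klBinReal q p := by
  have := sum_mul_log_sum_div_sum_le univ (a := fun x : Bool => if x then q else 1 - q)
    (b := fun x => if x then p else 1 - p) (by simp [hq0, hq1]) (by simp [hp0, hp1])
    (fun x _ hx => by
      cases x
      · simp only [Bool.false_eq_true, if_false, sub_eq_zero] at hx ⊢
        exact (h1 hx.symm).symm
      · exact h0 hx)
  simpa [klBinReal, add_comm] using this

lemma klBinReal_sum_le {ι : Type*} [Fintype ι] {w q p : ι → ℝ}
    (hw0 : ∀ i, 0 ≤ w i) (hw1 : ∑ i, w i = 1)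
    (hq0 : ∀ i, 0 ≤ q i) (hq1 : ∀ i, q i ≤ 1)
    (hp0 : ∀ i, 0 ≤ p i) (hp1 : ∀ i, p i ≤ 1)
    (h0 : ∀ i, p i = 0 → q i = 0) (h1 : ∀ i, p i = 1 → q i = 1) :
    klBinReal (∑ i, w i * q i) (∑ i, w i * p i) ≤ ∑ i, w i * klBinReal (q i) (p i) := by
  have weighted_log_sum {u v : ι → ℝ} (hu : ∀ i, 0 ≤ u i) (hv : ∀ i, 0 ≤ v i)
      (huv : ∀ i, v i = 0 → u i = 0) :
      (∑ i, w i * u i) * log ((∑ i, w i * u i) / ∑ i, w i * v i) ≤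
        ∑ i, w i * (u i * log (u i / v i)) := by
    refine (sum_mul_log_sum_div_sum_le univ (fun i _ => mul_nonneg (hw0 i) (hu i))
      (fun i _ => mul_nonneg (hw0 i) (hv i)) fun i _ h => ?_).trans_eq
      (sum_congr rfl fun i _ => ?_)
    · rcases mul_eq_zero.1 h with h | h <;> simp [h, huv]
    · rcases eq_or_ne (w i) 0 with h | h
      · simp [h]
      · rw [mul_div_mul_left _ _ h, mul_assoc]
  have one_sub_sum {r : ι → ℝ} : ∑ i, w i * (1 - r i) = 1 - ∑ i, w i * r i := by
    simp only [mul_sub, mul_one, sum_sub_distrib, hw1]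
  have hpos := weighted_log_sum hq0 hp0 h0
  have hneg := weighted_log_sum (u := fun i => 1 - q i) (v := fun i => 1 - p i)
    (fun i => sub_nonneg.2 (hq1 i)) (fun i => sub_nonneg.2 (hp1 i))
    fun i hp => sub_eq_zero.2 (h1 i (sub_eq_zero.1 hp).symm).symm
  rw [one_sub_sum, one_sub_sum] at hneg
  simpa only [klBinReal, mul_add, sum_add_distrib] using add_le_add hpos hneg

/-- The finite form of the Donsker–Varadhan change-of-measure inequality. -/
lemma sum_mul_le_sum_mul_log_div_add_log_sum_mul_exp {ι : Type*} [Fintype ι] {Q P : ι → ℝ}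
    (hQ0 : ∀ i, 0 ≤ Q i) (hQ1 : ∑ i, Q i = 1) (hP0 : ∀ i, 0 ≤ P i)
    (hQP : ∀ i, P i = 0 → Q i = 0) (f : ι → ℝ) :
    ∑ i, Q i * f i ≤ ∑ i, Q i * log (Q i / P i) + log (∑ i, P i * exp (f i)) := by
  have hls := sum_mul_log_sum_div_sum_le univ (a := Q) (b := fun i => P i * exp (f i))
    (fun i _ => hQ0 i) (fun i _ => mul_nonneg (hP0 i) (exp_pos _).le)
    fun i _ h => hQP i (by simpa using h)
  have hterm (i : ι) :
      Q i * log (Q i / (P i * exp (f i))) = Q i * log (Q i / P i) - Q i * f i := by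
    rcases eq_or_ne (Q i) 0 with h | h
    · simp [h]
    have hP : P i ≠ 0 := fun hP => h (hQP i hP)
    rw [← div_div, log_div (div_ne_zero h hP) (exp_ne_zero _), log_exp, mul_sub]
  rw [hQ1, one_mul, one_div, log_inv] at hls
  simp only [hterm, sum_sub_distrib] at hls
  linarith

lemma exp_natCast_mul_log_div_mul_pow {x y : ℝ} {k : ℕ} (hx : 0 ≤ x) (hy : 0 ≤ y)
    (hxk : x = 0 → k = 0) (hyk : y = 0 → k = 0) :
    exp (k * log (x / y)) * y ^ k = x ^ k := by
  rcases eq_or_ne k 0 with rfl | hk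
  · simp
  have hx : 0 < x := hx.lt_of_ne fun h => hk (hxk h.symm)
  have hy : 0 < y := hy.lt_of_ne fun h => hk (hyk h.symm)
  rw [exp_nat_mul, exp_log (div_pos hx hy), div_pow, div_mul_cancel₀ _ (by positivity)]

lemma pow_mul_pow_mul_exp_mul_klBinReal {m k : ℕ} (hk : k ≤ m) {p : ℝ} (hp0 : 0 ≤ p)
    (hp1 : p ≤ 1) (h0 : p = 0 → k = 0) (h1 : p = 1 → k = m) :
    p ^ k * (1 - p) ^ (m - k) * exp (m * klBinReal (k / m) p) =
      ((k : ℝ) / m) ^ k * (1 - (k : ℝ) / m) ^ (m - k) := by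
  rcases m.eq_zero_or_pos with rfl | hm
  · simp [Nat.le_zero.1 hk]
  have hm : (m : ℝ) ≠ 0 := by positivity
  have hkm : (k : ℝ) ≤ m := by exact_mod_cast hk
  have hexponent : m * klBinReal (k / m) p =
      k * log (k / m / p) + ((m - k : ℕ) : ℝ) * log ((1 - k / m) / (1 - p)) := by
    rw [klBinReal, Nat.cast_sub hk]
    field_simp
  rw [hexponent, exp_add]
  calc _ = (exp (k * log (k / m / p)) * p ^ k) *
        (exp (((m - k : ℕ) : ℝ) * log ((1 - k / m) / (1 - p))) * (1 - p) ^ (m - k)) := by ring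
    _ = _ := by
      rw [exp_natCast_mul_log_div_mul_pow (by positivity) hp0 (by simp [hm]) h0,
        exp_natCast_mul_log_div_mul_pow (by rwa [sub_nonneg, div_le_one₀ (by positivity)])
          (by linarith) (fun h => by
            rw [sub_eq_zero, eq_comm, div_eq_one_iff_eq hm, Nat.cast_inj] at h; omega)
          fun h => by rw [h1 (by linarith), Nat.sub_self]]

lemma eq_zero_and_eq_of_choose_mul_pow_mul_pow_ne_zero {m k : ℕ} {p : ℝ}
    (h : (m.choose k : ℝ) * p ^ k * (1 - p) ^ (m - k) ≠ 0) :
    (p = 0 → k = 0) ∧ (p = 1 → k = m) := by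
  have hk : k ≤ m := by_contra fun hk => h (by simp [Nat.choose_eq_zero_of_lt (not_le.1 hk)])
  refine ⟨fun hp => by_contra fun hk => h (by simp [hp, hk]), fun hp => ?_⟩
  by_contra hkm
  exact h (by simp [hp, zero_pow (Nat.sub_ne_zero_of_lt (lt_of_le_of_ne hk hkm))])

lemma choose_mul_pow_mul_pow_mul_exp_mul_klBinReal_le_one {m k : ℕ} (p : I) {l : ℝ}
    (hl0 : 0 ≤ l) (hl : l ≤ m) :
    (m.choose k : ℝ) * p ^ k * (1 - p) ^ (m - k) * exp (l * klBinReal (k / m) p) ≤ 1 := by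
  by_cases hb : (m.choose k : ℝ) * p ^ k * (1 - p) ^ (m - k) = 0
  · simp [hb]
  obtain ⟨h0, h1⟩ := eq_zero_and_eq_of_choose_mul_pow_mul_pow_ne_zero hb
  have hk : k ≤ m := by_contra fun hk => hb (by simp [Nat.choose_eq_zero_of_lt (not_le.1 hk)])
  rcases m.eq_zero_or_pos with rfl | hm
  · simp [Nat.le_zero.1 hk, le_antisymm (by simpa using hl) hl0]
  have hq : (k : ℝ) / m ∈ I :=
    ⟨by positivity, (div_le_one₀ (by positivity)).2 (by exact_mod_cast hk)⟩
  have hkl : 0 ≤ klBinReal (k / m) p :=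
    klBinReal_nonneg hq.1 hq.2 p.2.1 p.2.2 (fun hp => by simp [h0 hp])
      fun hp => by simp [h1 hp, hm.ne']
  calc (m.choose k : ℝ) * p ^ k * (1 - p) ^ (m - k) * exp (l * klBinReal (k / m) p)
      ≤ m.choose k * p ^ k * (1 - p) ^ (m - k) * exp (m * klBinReal (k / m) p) :=
        mul_le_mul_of_nonneg_left (exp_le_exp.2 (by gcongr)) binomial_nonneg
    _ = Bin(m, ⟨_, hq⟩).real {k} := by
        rw [binomial_real_singleton, mul_assoc, mul_assoc, ← mul_assoc (_ ^ k),
          pow_mul_pow_mul_exp_mul_klBinReal hk p.2.1 p.2.2 h0 h1, ← mul_assoc]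
    _ ≤ 1 := measureReal_le_one

lemma ae_binomial (n : ℕ) (p : I) :
    ∀ᵐ k ∂Bin(n, p), ((p : ℝ) = 0 → k = 0) ∧ ((p : ℝ) = 1 → k = n) :=
  ae_iff_of_countable.2 fun k hk => eq_zero_and_eq_of_choose_mul_pow_mul_pow_ne_zero
    fun h => hk (by rw [binomial_singleton, h, ENNReal.ofReal_zero])

section HasLawBinomial

variable {Ω : Type*} [MeasurableSpace Ω] {μ : Measure Ω} {K : Ω → ℕ} {m : ℕ} {p : I}

lemma integrable_comp_of_hasLaw_binomial (hK : HasLaw K Bin(m, p) μ) (f : ℕ → ℝ) :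
    Integrable (fun ω => f (K ω)) μ :=
  (hK.map_eq ▸ integrable_binomial f).comp_aemeasurable hK.aemeasurable

lemma integral_exp_mul_klBinReal_le (hK : HasLaw K Bin(m, p) μ) {l : ℝ} (hl0 : 0 ≤ l)
    (hl : l ≤ m) : ∫ ω, exp (l * klBinReal (K ω / m) p) ∂μ ≤ m + 1 := by
  refine (hK.integral_comp (f := fun k : ℕ => exp (l * klBinReal (k / m) p))
    .of_discrete).trans_le ?_
  rw [integral_binomial]
  calc _ ≤ ∑ k ∈ Iic m, (1 : ℝ) := sum_le_sum fun k _ => by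
        rw [smul_eq_mul]
        exact choose_mul_pow_mul_pow_mul_exp_mul_klBinReal_le_one p hl0 hl
    _ = m + 1 := by simp

lemma integral_sum_mul_exp_mul_klBinReal_le {H : Type*} [Fintype H] {P : H → ℝ}
    (hP0 : ∀ c, 0 ≤ P c) (hP1 : ∑ c, P c = 1) {K : H → Ω → ℕ} {p : H → I}
    (hK : ∀ c, HasLaw (K c) Bin(m, p c) μ) {l : ℝ} (hl0 : 0 ≤ l) (hl : l ≤ m) :
    ∫ ω, ∑ c, P c * exp (l * klBinReal (K c ω / m) (p c)) ∂μ ≤ m + 1 := by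
  rw [integral_finsetSum _ fun c _ => (integrable_comp_of_hasLaw_binomial (hK c)
    fun k => exp (l * klBinReal (k / m) (p c))).const_mul (P c)]
  calc ∑ c, ∫ ω, P c * exp (l * klBinReal (K c ω / m) (p c)) ∂μ
      ≤ ∑ c, P c * (m + 1) := sum_le_sum fun c _ => by
        rw [integral_const_mul]
        exact mul_le_mul_of_nonneg_left (integral_exp_mul_klBinReal_le (hK c) hl0 hl) (hP0 c)
    _ = m + 1 := by rw [← sum_mul, hP1, one_mul]

end HasLawBinomial

section SampleCount

variable {X : Type*} [MeasurableSpace X] (D : Measure X) {m : ℕ} {r : X → Prop}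
  [DecidablePred r]

lemma measure_pi_card_filter_eq [SigmaFinite D] (hr : MeasurableSet {x | r x}) (k : ℕ) :
    Measure.pi (fun _ : Fin m => D) {S | (univ.filter fun i => r (S i)).card = k} =
      m.choose k * D {x | r x} ^ k * D {x | r x}ᶜ ^ (m - k) := by
  set B := {x | r x}
  have fiber (A : Finset (Fin m)) :
      (fun S : Fin m → X => univ.filter fun i => r (S i)) ⁻¹' {A} =
        Set.univ.pi fun i => if i ∈ A then B else Bᶜ := by
    ext S
    simp only [Set.mem_preimage, Set.mem_singleton_iff, Finset.ext_iff, mem_filter, mem_univ,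
      true_and, Set.mem_pi, Set.mem_univ, true_implies]
    exact forall_congr' fun i => by split_ifs with hi <;> simp [hi, B]
  have hk : {S : Fin m → X | (univ.filter fun i => r (S i)).card = k} =
      (fun S => univ.filter fun i => r (S i)) ⁻¹' ↑(powersetCard k (univ : Finset (Fin m))) := by
    ext S
    simp
  rw [hk, ← sum_measure_preimage_singleton _ fun A _ => fiber A ▸
    MeasurableSet.univ_pi fun i => by split_ifs; exacts [hr, hr.compl]]
  calc ∑ A ∈ powersetCard k univ,
        Measure.pi (fun _ => D) ((fun S => univ.filter fun i => r (S i)) ⁻¹' {A})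
      = ∑ A ∈ powersetCard k (univ : Finset (Fin m)), D B ^ k * D Bᶜ ^ (m - k) := by
        refine sum_congr rfl fun A hA => ?_
        rw [fiber, Measure.pi_pi, prod_apply_ite, prod_const, prod_const, filter_univ_mem,
          filter_not, filter_univ_mem, ← compl_eq_univ_sdiff, card_compl, Fintype.card_fin,
          (mem_powersetCard.1 hA).2]
    _ = _ := by
        rw [sum_const, card_powersetCard, card_univ, Fintype.card_fin, nsmul_eq_mul, mul_assoc]

lemma measurable_card_filter (hr : MeasurableSet {x | r x}) :
    Measurable fun S : Fin m → X => (univ.filter fun i => r (S i)).card := by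
  simp only [card_filter]
  exact Finset.measurable_sum _ fun i _ =>
    Measurable.ite (measurable_pi_apply i hr) measurable_const measurable_const

lemma hasLaw_card_filter_binomial [IsProbabilityMeasure D] (hr : MeasurableSet {x | r x})
    (p : I) (hp : D.real {x | r x} = p) :
    HasLaw (fun S : Fin m → X => (univ.filter fun i => r (S i)).card) Bin(m, p)
      (Measure.pi fun _ => D) := by
  refine ⟨(measurable_card_filter hr).aemeasurable, Measure.ext_of_singleton fun k => ?_⟩
  have hB : D {x | r x} = ENNReal.ofReal p := by rw [← hp, ofReal_measureReal]
  have hBc : D {x | r x}ᶜ = ENNReal.ofReal (1 - p) := by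
    rw [prob_compl_eq_one_sub hr, hB, ENNReal.ofReal_sub _ p.2.1, ENNReal.ofReal_one]
  rw [Measure.map_apply (measurable_card_filter hr) (measurableSet_singleton k),
    binomial_singleton]
  simp only [Set.preimage, Set.mem_singleton_iff]
  rw [measure_pi_card_filter_eq D hr k, hB, hBc,
    ENNReal.ofReal_mul (mul_nonneg (by positivity) (pow_nonneg p.2.1 _)),
    ENNReal.ofReal_mul (by positivity),
    ENNReal.ofReal_pow p.2.1, ENNReal.ofReal_pow (sub_nonneg.2 p.2.2), ENNReal.ofReal_natCast]

end SampleCount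

lemma ofReal_one_sub_le_measure_le_div {Ω : Type*} [MeasurableSpace Ω] {μ : Measure Ω}
    [IsProbabilityMeasure μ] {Y : Ω → ℝ} (hY0 : 0 ≤ᵐ[μ] Y) (hY : Integrable Y μ)
    {a δ : ℝ} (ha : 0 < a) (hδ : 0 < δ) (hE : ∫ ω, Y ω ∂μ ≤ a) :
    ENNReal.ofReal (1 - δ) ≤ μ {ω | Y ω ≤ a / δ} := by
  have hmarkov : μ.real {ω | a / δ ≤ Y ω} ≤ δ := by
    have := (mul_meas_ge_le_integral_of_nonneg hY0 hY (a / δ)).trans hE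
    rwa [div_mul_eq_mul_div, div_le_iff₀ hδ, mul_le_mul_iff_right₀ ha] at this
  have hcompl : μ {ω | Y ω ≤ a / δ}ᶜ ≤ ENNReal.ofReal δ := by
    refine (measure_mono (t := {ω | a / δ ≤ Y ω}) fun ω (hω : ¬ Y ω ≤ a / δ) =>
      (not_le.1 hω).le).trans ?_
    rw [← ofReal_measureReal]
    exact ENNReal.ofReal_le_ofReal hmarkov
  rw [ENNReal.ofReal_sub _ hδ.le, ENNReal.ofReal_one, tsub_le_iff_right]
  calc 1 = μ Set.univ := measure_univ.symm
    _ ≤ μ {ω | Y ω ≤ a / δ} + μ {ω | Y ω ≤ a / δ}ᶜ := measure_univ_le_add_compl _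
    _ ≤ _ := by gcongr

lemma klDiv_eq_coe {H : Type*} [Fintype H] {Q P : H → ℝ} (hQP : ∀ c, P c = 0 → Q c = 0) :
    klDiv Q P = ((∑ c, Q c * log (Q c / P c) : ℝ) : EReal) := by
  rw [klDiv, if_neg fun ⟨c, hP, hQ⟩ => hQ (hQP c hP)]
  congr 2 with c
  split_ifs with h <;> simp [h]

lemma sum_mul_eq_zero_of_sum_mul_eq_zero {ι : Type*} [Fintype ι] {w u v : ι → ℝ}
    (hw : ∀ i, 0 ≤ w i) (hu : ∀ i, 0 ≤ u i) (huv : ∀ i, u i = 0 → v i = 0)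
    (h : ∑ i, w i * u i = 0) : ∑ i, w i * v i = 0 :=
  sum_eq_zero fun i _ => by
    rcases mul_eq_zero.1 ((sum_eq_zero_iff_of_nonneg fun i _ => mul_nonneg (hw i) (hu i)).1 h i
      (mem_univ i)) with h | h <;> simp [h, huv]

lemma klBin_le_of_sum_mul_exp_le {H : Type*} [Fintype H] {P Q q p : H → ℝ}
    (hP0 : ∀ c, 0 ≤ P c) (hP1 : ∑ c, P c = 1) (hQ0 : ∀ c, 0 ≤ Q c) (hQ1 : ∑ c, Q c = 1)
    (hq0 : ∀ c, 0 ≤ q c) (hq1 : ∀ c, q c ≤ 1) (hp0 : ∀ c, 0 ≤ p c) (hp1 : ∀ c, p c ≤ 1)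
    (h0 : ∀ c, p c = 0 → q c = 0) (h1 : ∀ c, p c = 1 → q c = 1) {l B : ℝ} (hl : 0 < l)
    (hB : ∑ c, P c * exp (l * klBinReal (q c) (p c)) ≤ B) :
    klBin (∑ c, Q c * q c) (∑ c, Q c * p c) ≤
      (klDiv Q P + (log B : EReal)) / (l : EReal) := by
  by_cases hQP : ∀ c, P c = 0 → Q c = 0
  swap
  · push Not at hQP
    rw [klDiv, if_pos hQP, EReal.top_add_coe, EReal.top_div_of_pos_ne_top (EReal.coe_pos.2 hl)
      (EReal.coe_ne_top _)]
    exact le_top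
  have one_sub_sum {r : H → ℝ} : ∑ c, Q c * (1 - r c) = 1 - ∑ c, Q c * r c := by
    simp only [mul_sub, mul_one, sum_sub_distrib, hQ1]
  have hmean0 (hp : ∑ c, Q c * p c = 0) : ∑ c, Q c * q c = 0 :=
    sum_mul_eq_zero_of_sum_mul_eq_zero hQ0 hp0 h0 hp
  have hmean1 (hp : ∑ c, Q c * p c = 1) : ∑ c, Q c * q c = 1 := by
    have := sum_mul_eq_zero_of_sum_mul_eq_zero (u := fun c => 1 - p c) (v := fun c => 1 - q c)
      hQ0 (fun c => sub_nonneg.2 (hp1 c)) (fun c h => by simp [h1 c (by linarith)])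
      (by rw [one_sub_sum, hp, sub_self])
    rw [one_sub_sum] at this
    linarith
  have hsum_pos : 0 < ∑ c, P c * exp (l * klBinReal (q c) (p c)) := by
    obtain ⟨c, -, hc⟩ := exists_ne_zero_of_sum_ne_zero (hP1.trans_ne one_ne_zero)
    exact sum_pos' (fun c _ => mul_nonneg (hP0 c) (exp_pos _).le)
      ⟨c, mem_univ c, mul_pos ((hP0 c).lt_of_ne' hc) (exp_pos _)⟩
  rw [klBin_eq_coe_klBinReal hmean0 hmean1, klDiv_eq_coe hQP, ← EReal.coe_add, ← EReal.coe_div,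
    EReal.coe_le_coe_iff, le_div_iff₀ hl]
  calc klBinReal (∑ c, Q c * q c) (∑ c, Q c * p c) * l
      ≤ ∑ c, Q c * (l * klBinReal (q c) (p c)) := by
        rw [mul_comm]
        simp_rw [mul_left_comm _ l, ← mul_sum]
        exact mul_le_mul_of_nonneg_left (klBinReal_sum_le hQ0 hQ1 hq0 hq1 hp0 hp1 h0 h1) hl.le
    _ ≤ ∑ c, Q c * log (Q c / P c) + log (∑ c, P c * exp (l * klBinReal (q c) (p c))) :=
        sum_mul_le_sum_mul_log_div_add_log_sum_mul_exp hQ0 hQ1 hP0 hQP _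
    _ ≤ ∑ c, Q c * log (Q c / P c) + log B := by gcongr

theorem pac_bayes_langford_seeger_general
    {X : Type*} [MeasurableSpace X] (D : Measure X) [IsProbabilityMeasure D]
    {H : Type*} [Fintype H]
    (h : H → X → Bool) (hMeas : ∀ c, Measurable (h c))
    (t : X → Bool) (ht : Measurable t)
    (P : H → ℝ) (hP0 : ∀ c, 0 ≤ P c) (hP1 : ∑ c, P c = 1)
    (m : ℕ) (hm : 2 ≤ m)
    (δ : ℝ) (hδ0 : 0 < δ) :
    ENNReal.ofReal (1 - δ) ≤
      Measure.pi (fun _ : Fin m => D)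
        {S : Fin m → X |
          ∀ Q : H → ℝ, (∀ c, 0 ≤ Q c) → ∑ c, Q c = 1 →
            klBin
              (∑ c, Q c * (((univ.filter fun i : Fin m => h c (S i) ≠ t (S i)).card : ℝ) / m))
              (∑ c, Q c * (D {x | h c x ≠ t x}).toReal)
            ≤ (klDiv Q P + ((Real.log (2 * m / δ) : ℝ) : EReal)) / (((m : ℝ) - 1 : ℝ) : EReal)} := by
  set K : H → (Fin m → X) → ℕ :=
    fun c S => (univ.filter fun i => h c (S i) ≠ t (S i)).card
  let p (c : H) : I := ⟨D.real {x | h c x ≠ t x}, measureReal_nonneg, measureReal_le_one⟩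
  have hlaw (c : H) : HasLaw (K c) Bin(m, p c) (Measure.pi fun _ => D) :=
    hasLaw_card_filter_binomial D (measurableSet_eq_fun (hMeas c) ht).compl (p c) rfl
  have hm : (2 : ℝ) ≤ m := by exact_mod_cast hm
  have hdegenerate : ∀ᵐ S ∂Measure.pi (fun _ => D),
      ∀ c, ((p c : ℝ) = 0 → K c S = 0) ∧ ((p c : ℝ) = 1 → K c S = m) :=
    ae_all_iff.2 fun c => ((hlaw c).ae_iff .of_discrete).2 (ae_binomial m (p c))
  have hmarkov := ofReal_one_sub_le_measure_le_div (a := 2 * m)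
    (ae_of_all _ fun S => sum_nonneg fun c _ => mul_nonneg (hP0 c) (exp_pos _).le)
    (integrable_finsetSum _ fun c _ => (integrable_comp_of_hasLaw_binomial (hlaw c)
      fun k => exp ((m - 1) * klBinReal (k / m) (p c))).const_mul (P c))
    (by positivity) hδ0 ((integral_sum_mul_exp_mul_klBinReal_le hP0 hP1 hlaw (by linarith)
      (by linarith)).trans (by linarith))
  refine hmarkov.trans (measure_mono_ae (hdegenerate.mono fun S hS hY Q hQ0 hQ1 => ?_))
  have hK (c : H) : K c S ≤ m := (card_filter_le _ _).trans_eq (by simp)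
  exact klBin_le_of_sum_mul_exp_le (q := fun c => K c S / m) hP0 hP1 hQ0 hQ1
    (fun c => by positivity) (fun c => div_le_one_of_le₀ (by exact_mod_cast hK c) (by positivity))
    (fun c => (p c).2.1) (fun c => (p c).2.2) (fun c hc => by simp [(hS c).1 hc])
    (fun c hc => by simp [(hS c).2 hc, show (m : ℝ) ≠ 0 by positivity]) (by linarith) hY

/-- **PAC-Bayes theorem (Langford–Seeger form).** For any prior `P` on a finite concept
space `H`, any distribution `D` on instances, any `m ≥ 2` and `0 < δ ≤ 1`, with probability
at least `1 - δ` over an i.i.d. sample `S` of size `m` from `D`, every distribution `Q` on `H`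
satisfies `kl(ε̂(Q) ‖ ε(Q)) ≤ (KL(Q‖P) + ln(2m/δ)) / (m - 1)`. -/
theorem pac_bayes_langford_seeger
    {X : Type*} [MeasurableSpace X] (D : Measure X) [IsProbabilityMeasure D]
    {H : Type*} [Fintype H]
    (h : H → X → Bool) (hMeas : ∀ c, Measurable (h c))
    (t : X → Bool) (ht : Measurable t)
    (P : H → ℝ) (hP0 : ∀ c, 0 ≤ P c) (hP1 : ∑ c, P c = 1)
    (m : ℕ) (hm : 2 ≤ m)
    (δ : ℝ) (hδ0 : 0 < δ) (hδ1 : δ ≤ 1) :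
    ENNReal.ofReal (1 - δ) ≤
      Measure.pi (fun _ : Fin m => D)
        {S : Fin m → X |
          ∀ Q : H → ℝ, (∀ c, 0 ≤ Q c) → ∑ c, Q c = 1 →
            klBin
              (∑ c, Q c * (((univ.filter fun i : Fin m => h c (S i) ≠ t (S i)).card : ℝ) / m))
              (∑ c, Q c * (D {x | h c x ≠ t x}).toReal)
            ≤ (klDiv Q P + ((Real.log (2 * m / δ) : ℝ) : EReal)) / (((m : ℝ) - 1 : ℝ) : EReal)} :=
  pac_bayes_langford_seeger_general D h hMeas t ht P hP0 hP1 m hm δ hδ0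
end

section
/- Realizable PAC-Bayes theorem for the Bayesian classifier: For any probability distribution P on a finite concept space H, any probability distribution D on the instance space X, any integer m ≥ 2, and any 0 < δ ≤ 1, assume realizability, i.e. the target concept t belongs to H and P(t) > 0 (so that for every sample S the consistent set U is nonempty and P(U) > 0). Then with probability at least 1 − δ over the choice of an i.i.d. sample S of m instances drawn from D, the Bayesian posterior Q* satisfies −ln(1 − ε(Q*)) ≤ (ln(1/P(U)) + ln(2m/δ))/(m − 1). -/
open MeasureTheory Finset

/-!
Write `p c` for the probability that `c` agrees with `t` on a fresh point and
`Z S = ∑_{c consistent with S} P c · p c ^ (-(m-1))`. A concept is consistent with `S` with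
probability `p c ^ m`, so `E[Z] = ∑ P c · p c ≤ 1`, and by Markov `Z ≤ 1/δ` with probability at
least `1 - δ`; almost surely every consistent concept has `p c > 0`. On that event,
`1 - ε(Q*)` is the `P`-weighted mean of `p` over `U`, and Jensen's inequality for the convex map
`x ↦ x ^ (-(m-1))` gives `(1 - ε(Q*)) ^ (-(m-1)) ≤ Z / P(U) ≤ 1 / (δ P(U))`. Taking logarithms
yields the bound, even with `ln(1/δ)` in place of `ln(2m/δ)`.
-/

theorem ofReal_one_sub_le_measure_le_inv {Ω : Type*} [MeasurableSpace Ω] {μ : Measure Ω}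
    [IsProbabilityMeasure μ] {Z : Ω → ℝ} (hZ0 : 0 ≤ Z) (hZi : Integrable Z μ)
    (hEZ : ∫ ω, Z ω ∂μ ≤ 1) {δ : ℝ} (hδ : 0 < δ) :
    ENNReal.ofReal (1 - δ) ≤ μ {ω | Z ω ≤ δ⁻¹} := by
  have hmarkov : μ {ω | δ⁻¹ ≤ Z ω} ≤ ENNReal.ofReal δ := by
    have h := (mul_meas_ge_le_integral_of_nonneg (ae_of_all μ hZ0) hZi δ⁻¹).trans hEZ
    rw [inv_mul_le_iff₀ hδ, mul_one] at h
    exact (ENNReal.ofReal_toReal (measure_ne_top μ _)).symm.trans_le (ENNReal.ofReal_le_ofReal h)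
  have hcover : 1 ≤ μ {ω | Z ω ≤ δ⁻¹} + ENNReal.ofReal δ :=
    calc 1 = μ Set.univ := measure_univ.symm
      _ ≤ μ {ω | Z ω ≤ δ⁻¹} + μ {ω | δ⁻¹ ≤ Z ω} :=
        (measure_mono fun ω _ => le_total (Z ω) δ⁻¹).trans (measure_union_le _ _)
      _ ≤ μ {ω | Z ω ≤ δ⁻¹} + ENNReal.ofReal δ := by gcongr
  rw [ENNReal.ofReal_sub _ hδ.le, ENNReal.ofReal_one]
  exact tsub_le_iff_right.2 hcover

theorem ae_forall_mem_imp_measureReal_pos {X ι : Type*} [MeasurableSpace X] (D : Measure X)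
    [IsFiniteMeasure D] [Countable ι] (A : ι → Set X) {m : ℕ} (hm : m ≠ 0) :
    ∀ᵐ S ∂(Measure.pi fun _ : Fin m => D), ∀ c, (∀ i, S i ∈ A c) → 0 < D.real (A c) := by
  rw [ae_all_iff]
  intro c
  rcases (measureReal_nonneg (μ := D) (s := A c)).eq_or_lt with hnull | hpos
  · have hpi : Measure.pi (fun _ : Fin m => D) (Set.univ.pi fun _ => A c) = 0 := by
      simp [Measure.pi_pi, (measureReal_eq_zero_iff).1 hnull.symm, hm]
    filter_upwards [measure_eq_zero_iff_ae_notMem.1 hpi] with S hS hcons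
    exact absurd (Set.mem_univ_pi.2 hcons) hS
  · exact ae_of_all _ fun _ _ => hpos

theorem integral_sum_indicator_univ_pi {X ι : Type*} [MeasurableSpace X] (D : Measure X)
    [IsFiniteMeasure D] [Fintype ι] {A : ι → Set X} (hA : ∀ c, MeasurableSet (A c)) (w : ι → ℝ)
    (m : ℕ) :
    ∫ S, ∑ c, (Set.univ.pi fun _ : Fin m => A c).indicator (fun _ => w c) S
        ∂(Measure.pi fun _ => D) = ∑ c, w c * D.real (A c) ^ m := by
  rw [integral_finsetSum _ fun c _ => (integrable_const _).indicator (.univ_pi fun _ => hA c)]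
  refine Finset.sum_congr rfl fun c _ => ?_
  rw [integral_indicator_const _ (.univ_pi fun _ => hA c), measureReal_def, Measure.pi_pi]
  simp [measureReal_def, mul_comm]

theorem inv_pow_mul_pow_succ (p : ℝ) (k : ℕ) : (p ^ k)⁻¹ * p ^ (k + 1) = p := by
  rcases eq_or_ne p 0 with rfl | hp
  · simp
  · rw [pow_succ, inv_mul_cancel_left₀ (pow_ne_zero k hp)]

theorem nat_mul_neg_log_centerMass_le {ι : Type*} {s : Finset ι} {P p : ι → ℝ}
    (hP : ∀ i ∈ s, 0 ≤ P i) (hPs : 0 < ∑ i ∈ s, P i) (hp : ∀ i ∈ s, 0 < p i) (k : ℕ) {B : ℝ}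
    (hB : ∑ i ∈ s, P i * (p i ^ k)⁻¹ ≤ B) :
    k * -Real.log (s.centerMass P p) ≤ Real.log (1 / ∑ i ∈ s, P i) + Real.log B := by
  have hq : 0 < s.centerMass P p := (convex_Ioi (0 : ℝ)).centerMass_mem hP hPs hp
  have hjensen : (s.centerMass P p ^ k)⁻¹ ≤ (∑ i ∈ s, P i)⁻¹ * ∑ i ∈ s, P i * (p i ^ k)⁻¹ := by
    simpa only [← zpow_natCast, ← zpow_neg, Finset.centerMass, smul_eq_mul, Function.comp_apply]
      using (convexOn_zpow (-k : ℤ)).map_centerMass_le hP hPs hp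
  have hlhs : 0 < (s.centerMass P p ^ k)⁻¹ := by positivity
  calc k * -Real.log (s.centerMass P p) = Real.log (s.centerMass P p ^ k)⁻¹ := by
        rw [Real.log_inv, Real.log_pow]; ring
    _ ≤ Real.log ((∑ i ∈ s, P i)⁻¹ * B) :=
        Real.log_le_log hlhs (hjensen.trans (mul_le_mul_of_nonneg_left hB (by positivity)))
    _ = Real.log (1 / ∑ i ∈ s, P i) + Real.log B := by
        have hBpos : 0 < B :=
          (pos_of_mul_pos_right (hlhs.trans_le hjensen) (by positivity)).trans_le hB
        rw [Real.log_mul (by positivity) hBpos.ne', one_div]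

theorem sum_ite_mem_div_mul_one_sub {ι : Type*} [Fintype ι] [DecidableEq ι] (s : Finset ι)
    (P p : ι → ℝ) (hs : ∑ i ∈ s, P i ≠ 0) :
    ∑ i, (if i ∈ s then P i / ∑ j ∈ s, P j else 0) * (1 - p i) = 1 - s.centerMass P p := by
  simp only [ite_mul, zero_mul, Finset.sum_ite_mem, univ_inter, Finset.centerMass, smul_eq_mul,
    div_mul_eq_mul_div, ← Finset.sum_div, mul_sub, mul_one, Finset.sum_sub_distrib]
  field_simp

open Classical in
theorem ofReal_one_sub_le_measure_sum_consistent_inv_pow_le {X ι : Type*} [MeasurableSpace X]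
    (D : Measure X) [IsProbabilityMeasure D] [Fintype ι] {A : ι → Set X}
    (hA : ∀ c, MeasurableSet (A c)) {P : ι → ℝ} (hP0 : ∀ c, 0 ≤ P c) (hP1 : ∑ c, P c = 1)
    (k : ℕ) {δ : ℝ} (hδ : 0 < δ) :
    ENNReal.ofReal (1 - δ) ≤ Measure.pi (fun _ : Fin (k + 1) => D)
      {S | (∀ c, (∀ i, S i ∈ A c) → 0 < D.real (A c)) ∧
        ∑ c ∈ univ.filter (fun c => ∀ i, S i ∈ A c), P c * (D.real (A c) ^ k)⁻¹ ≤ δ⁻¹} := by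
  set w : ι → ℝ := fun c => P c * (D.real (A c) ^ k)⁻¹
  set Z : (Fin (k + 1) → X) → ℝ :=
    fun S => ∑ c, (Set.univ.pi fun _ => A c).indicator (fun _ => w c) S
  have hZ0 : 0 ≤ Z := fun S =>
    Finset.sum_nonneg fun c _ =>
      Set.indicator_nonneg (fun _ _ => mul_nonneg (hP0 c) (by positivity)) S
  have hZi : Integrable Z (Measure.pi fun _ => D) :=
    integrable_finsetSum _ fun c _ => (integrable_const _).indicator (.univ_pi fun _ => hA c)
  have hEZ : ∫ S, Z S ∂(Measure.pi fun _ => D) ≤ 1 :=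
    calc ∫ S, Z S ∂(Measure.pi fun _ => D) = ∑ c, P c * D.real (A c) := by
          simp only [Z, integral_sum_indicator_univ_pi D hA, w, mul_assoc, inv_pow_mul_pow_succ]
      _ ≤ ∑ c, P c := Finset.sum_le_sum fun c _ =>
          mul_le_of_le_one_right (hP0 c) measureReal_le_one
      _ = 1 := hP1
  have hZ : ∀ S, Z S = ∑ c ∈ univ.filter (fun c => ∀ i, S i ∈ A c), w c := fun S => by
    simp only [Z, Finset.sum_filter, Set.indicator_apply, Set.mem_univ_pi]
  refine (ofReal_one_sub_le_measure_le_inv hZ0 hZi hEZ hδ).trans (measure_mono_ae ?_)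
  filter_upwards [ae_forall_mem_imp_measureReal_pos D A k.succ_ne_zero] with S hpos hZS
  exact ⟨hpos, hZ S ▸ hZS⟩

theorem pac_bayes_realizable_general
    {X : Type*} [MeasurableSpace X] (D : Measure X) [IsProbabilityMeasure D]
    {H : Type*} [Fintype H] [DecidableEq H]
    (h : H → X → Bool) (hMeas : ∀ c, Measurable (h c))
    (t : X → Bool) (ht : Measurable t)
    (c₀ : H) (hc₀ : h c₀ = t)
    (P : H → ℝ) (hP0 : ∀ c, 0 ≤ P c) (hP1 : ∑ c, P c = 1) (hreal : 0 < P c₀)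
    (m : ℕ) (hm : 2 ≤ m)
    (δ : ℝ) (hδ0 : 0 < δ) :
    ENNReal.ofReal (1 - δ) ≤
      Measure.pi (fun _ : Fin m => D)
        {S : Fin m → X |
          -- the set of concepts consistent with the sample `S`
          let U : Finset H := univ.filter fun c => ∀ i : Fin m, h c (S i) = t (S i)
          -- its total prior probability (the marginal likelihood of the data)
          let PU : ℝ := ∑ c ∈ U, P c
          -- the Bayesian posterior
          let Qstar : H → ℝ := fun c => if c ∈ U then P c / PU else 0
          -- its expected generalization error
          let eps : ℝ := ∑ c, Qstar c * (D {x | h c x ≠ t x}).toReal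
          (if eps = 1 then (⊤ : EReal) else ((-Real.log (1 - eps) : ℝ) : EReal))
            ≤ (((Real.log (1 / PU) + Real.log (2 * m / δ)) / ((m : ℝ) - 1) : ℝ) : EReal)} := by
  obtain ⟨k, rfl⟩ : ∃ k, m = k + 1 := ⟨m - 1, by omega⟩
  have hA : ∀ c, MeasurableSet {x | h c x = t x} := fun c => measurableSet_eq_fun (hMeas c) ht
  refine (ofReal_one_sub_le_measure_sum_consistent_inv_pow_le D hA hP0 hP1 k hδ0).trans
    (measure_mono fun S ⟨hpos, hweight⟩ => ?_)
  rw [Set.mem_ofPred_eq]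
  dsimp only
  set U : Finset H := univ.filter fun c => ∀ i : Fin (k + 1), h c (S i) = t (S i)
  have hUpos : 0 < ∑ c ∈ U, P c :=
    hreal.trans_le (single_le_sum (fun c _ => hP0 c) (by simp [U, hc₀]))
  have hU : ∀ c ∈ U, 0 < D.real {x | h c x = t x} := fun c hc => hpos c (mem_filter.1 hc).2
  have hq : 0 < U.centerMass P fun c => D.real {x | h c x = t x} :=
    (convex_Ioi (0 : ℝ)).centerMass_mem (fun c _ => hP0 c) hUpos hU
  have hlog := nat_mul_neg_log_centerMass_le (fun c _ => hP0 c) hUpos hU k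
    (by convert hweight; rfl)
  have heps : ∑ c, (if c ∈ U then P c / ∑ c ∈ U, P c else 0) * (D {x | h c x ≠ t x}).toReal
      = 1 - U.centerMass P fun c => D.real {x | h c x = t x} := by
    rw [← sum_ite_mem_div_mul_one_sub U _ _ hUpos.ne']
    simp only [← measureReal_def, ← probReal_compl_eq_one_sub (hA _)]
    rfl
  have hk : (0 : ℝ) < k := Nat.cast_pos.2 (by omega)
  have hδm : Real.log δ⁻¹ ≤ Real.log (2 * ((k : ℝ) + 1) / δ) := by
    refine Real.log_le_log (by positivity) ?_
    rw [inv_eq_one_div]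
    gcongr
    linarith
  rw [heps, if_neg (sub_eq_self.not.2 hq.ne'), EReal.coe_le_coe_iff, sub_sub_cancel,
    Nat.cast_add_one, add_sub_cancel_right, le_div_iff₀ hk]
  linarith

/-- **Realizable PAC-Bayes theorem for the Bayesian classifier.** Assume the target concept
`t` is realized by some `c₀ ∈ H` with prior weight `P c₀ > 0`. Then with probability at least
`1 - δ` over an i.i.d. sample `S` of size `m ≥ 2` from `D`, the Bayesian posterior `Q*`
(the prior `P` conditioned on the set `U` of concepts consistent with `S`) satisfies
`-ln(1 - ε(Q*)) ≤ (ln(1/P(U)) + ln(2m/δ)) / (m - 1)`, where the left-hand side is `⊤` when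
`ε(Q*) = 1`. -/
theorem pac_bayes_realizable
    {X : Type*} [MeasurableSpace X] (D : Measure X) [IsProbabilityMeasure D]
    {H : Type*} [Fintype H] [DecidableEq H]
    (h : H → X → Bool) (hMeas : ∀ c, Measurable (h c))
    (t : X → Bool) (ht : Measurable t)
    (c₀ : H) (hc₀ : h c₀ = t)
    (P : H → ℝ) (hP0 : ∀ c, 0 ≤ P c) (hP1 : ∑ c, P c = 1) (hreal : 0 < P c₀)
    (m : ℕ) (hm : 2 ≤ m)
    (δ : ℝ) (hδ0 : 0 < δ) (hδ1 : δ ≤ 1) :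
    ENNReal.ofReal (1 - δ) ≤
      Measure.pi (fun _ : Fin m => D)
        {S : Fin m → X |
          -- the set of concepts consistent with the sample `S`
          let U : Finset H := univ.filter fun c => ∀ i : Fin m, h c (S i) = t (S i)
          -- its total prior probability (the marginal likelihood of the data)
          let PU : ℝ := ∑ c ∈ U, P c
          -- the Bayesian posterior
          let Qstar : H → ℝ := fun c => if c ∈ U then P c / PU else 0
          -- its expected generalization error
          let eps : ℝ := ∑ c, Qstar c * (D {x | h c x ≠ t x}).toReal
          (if eps = 1 then (⊤ : EReal) else ((-Real.log (1 - eps) : ℝ) : EReal))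
            ≤ (((Real.log (1 / PU) + Real.log (2 * m / δ)) / ((m : ℝ) - 1) : ℝ) : EReal)} :=
  pac_bayes_realizable_general D h hMeas t ht c₀ hc₀ P hP0 hP1 hreal m hm δ hδ0
end

section
/- Inverted (explicit) form of the realizable PAC-Bayes bound: For any probability distribution P on a finite concept space H, any probability distribution D on the instance space X, any integer m ≥ 2, and any 0 < δ ≤ 1, assume realizability, i.e. the target concept t belongs to H and P(t) > 0. Then with probability at least 1 − δ over the choice of an i.i.d. sample S of m instances drawn from D, the Bayesian posterior Q* satisfies ε(Q*) ≤ 1 − exp(−(ln(1/P(U)) + ln(2m/δ))/(m − 1)). -/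
/-!
Weight each concept `c` by `P c * (1 - ε c)⁻ⁿ`, where `n = m - 1`, on the samples it is
consistent with. A concept is consistent with probability `(1 - ε c)ᵐ`, so the total weight of
the consistent concepts has expectation `∑ P c * (1 - ε c) ≤ 1`, and by Markov's inequality it
stays below `1 / δ` with probability at least `1 - δ`. On such a sample, Jensen's inequality for
the convex map `x ↦ x⁻ⁿ` under the posterior weights `P c / P(U)` gives
`(1 - ε(Q*))⁻ⁿ ≤ 1 / (δ P(U))`, i.e. `1 - ε(Q*) ≥ (δ P(U))^(1/n)`, which is at least the stated
exponential because `2m ≥ 1`.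
-/

open MeasureTheory Finset

section Sampling

variable {X : Type*} [MeasurableSpace X] (D : Measure X)

theorem measure_pi_setOf_forall_mem [SigmaFinite D] (ι : Type*) [Fintype ι] (A : Set X) :
    Measure.pi (fun _ : ι => D) {S | ∀ k, S k ∈ A} = D A ^ Fintype.card ι := by
  simpa [Set.pi] using Measure.pi_pi (fun _ : ι => D) (fun _ => A)

theorem measureReal_pi_setOf_forall_mem [SigmaFinite D] (ι : Type*) [Fintype ι] (A : Set X) :
    (Measure.pi fun _ : ι => D).real {S | ∀ k, S k ∈ A} = D.real A ^ Fintype.card ι := by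
  simp [Measure.real, measure_pi_setOf_forall_mem]

theorem ae_pi_forall_mem_imp_measureReal_pos [IsFiniteMeasure D] {ι : Type*} [Countable ι]
    (A : ι → Set X) {m : ℕ} (hm : m ≠ 0) :
    ∀ᵐ S ∂Measure.pi (fun _ : Fin m => D), ∀ i, (∀ k, S k ∈ A i) → 0 < D.real (A i) := by
  rw [ae_all_iff]
  intro i
  by_cases hi : D (A i) = 0
  · have hnull : Measure.pi (fun _ : Fin m => D) {S | ∀ k, S k ∈ A i} = 0 := by
      rw [measure_pi_setOf_forall_mem, hi, zero_pow (by simpa using hm)]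
    filter_upwards [measure_eq_zero_iff_ae_notMem.1 hnull] with S hS hmem
    exact absurd hmem hS
  · exact ae_of_all _ fun _ _ => measureReal_nonneg.lt_of_ne' ((measureReal_ne_zero_iff).2 hi)

end Sampling

theorem inv_pow_mul_pow_succ_s5 {G₀ : Type*} [GroupWithZero G₀] (r : G₀) (n : ℕ) :
    (r ^ n)⁻¹ * r ^ (n + 1) = r := by
  rcases eq_or_ne r 0 with rfl | hr
  · simp
  · rw [pow_succ, inv_mul_cancel_left₀ (pow_ne_zero n hr)]

theorem ofReal_one_sub_le_measure_sum_indicator_lt {Ω ι : Type*} [MeasurableSpace Ω]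
    (μ : Measure Ω) [IsProbabilityMeasure μ] [Fintype ι] {E : ι → Set Ω}
    (hE : ∀ i, MeasurableSet (E i)) {a : ι → ℝ} (ha : ∀ i, 0 ≤ a i)
    (hsum : ∑ i, a i * μ.real (E i) ≤ 1) {δ : ℝ} (hδ : 0 < δ) :
    ENNReal.ofReal (1 - δ) ≤ μ {ω | ∑ i, (E i).indicator (fun _ => a i) ω < δ⁻¹} := by
  set Z : Ω → ℝ := fun ω => ∑ i, (E i).indicator (fun _ => a i) ω
  have hZ_int : Integrable Z μ :=
    integrable_finsetSum _ fun i _ => (integrable_const (a i)).indicator (hE i)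
  have hZ_meas : Measurable Z :=
    Finset.measurable_sum _ fun i _ => measurable_const.indicator (hE i)
  have hZ_nonneg : 0 ≤ᵐ[μ] Z :=
    ae_of_all _ fun ω => sum_nonneg fun i _ => Set.indicator_nonneg (fun _ _ => ha i) ω
  have hZ_mean : ∫ ω, Z ω ∂μ ≤ 1 := by
    rw [integral_finsetSum _ fun i _ => (integrable_const (a i)).indicator (hE i)]
    simpa [integral_indicator_const _ (hE _), mul_comm] using hsum
  have hmarkov : μ.real {ω | δ⁻¹ ≤ Z ω} ≤ δ := by
    have := (mul_meas_ge_le_integral_of_nonneg hZ_nonneg hZ_int δ⁻¹).trans hZ_mean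
    rwa [inv_mul_le_iff₀ hδ, mul_one] at this
  have hcompl : {ω | Z ω < δ⁻¹} = {ω | δ⁻¹ ≤ Z ω}ᶜ := by ext; simp
  rw [← ofReal_measureReal, hcompl,
    probReal_compl_eq_one_sub (measurableSet_le measurable_const hZ_meas)]
  exact ENNReal.ofReal_le_ofReal (by linarith)

theorem ofReal_one_sub_le_measure_pi_consistent {X ι : Type*} [MeasurableSpace X]
    (D : Measure X) [IsProbabilityMeasure D] [Fintype ι] {A : ι → Set X}
    (hA : ∀ i, MeasurableSet (A i)) {P : ι → ℝ} (hP0 : ∀ i, 0 ≤ P i) (hP1 : ∑ i, P i = 1)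
    (n : ℕ) {δ : ℝ} (hδ : 0 < δ) :
    ENNReal.ofReal (1 - δ) ≤ Measure.pi (fun _ : Fin (n + 1) => D)
      {S | (∀ i, (∀ k, S k ∈ A i) → 0 < D.real (A i)) ∧
        ∑ i, {S : Fin (n + 1) → X | ∀ k, S k ∈ A i}.indicator
          (fun _ => P i * (D.real (A i) ^ n)⁻¹) S < δ⁻¹} := by
  set μ := Measure.pi fun _ : Fin (n + 1) => D
  have hE : ∀ i, MeasurableSet {S : Fin (n + 1) → X | ∀ k, S k ∈ A i} := fun i => by
    simpa [Set.pi] using MeasurableSet.univ_pi fun _ : Fin (n + 1) => hA i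
  have hmean : ∑ i, P i * (D.real (A i) ^ n)⁻¹ * μ.real {S | ∀ k, S k ∈ A i} ≤ 1 := calc
    _ = ∑ i, P i * D.real (A i) := sum_congr rfl fun i _ => by
      rw [measureReal_pi_setOf_forall_mem, Fintype.card_fin, mul_assoc, inv_pow_mul_pow_succ_s5]
    _ ≤ ∑ i, P i := sum_le_sum fun i _ => mul_le_of_le_one_right (hP0 i) measureReal_le_one
    _ = 1 := hP1
  refine (ofReal_one_sub_le_measure_sum_indicator_lt μ hE
    (fun i => mul_nonneg (hP0 i) (inv_nonneg.2 (pow_nonneg measureReal_nonneg n))) hmean hδ).trans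
    (measure_mono_ae ?_)
  filter_upwards [ae_pi_forall_mem_imp_measureReal_pos D A n.succ_ne_zero] with S hpos hZ
  exact ⟨hpos, hZ⟩

theorem mul_lt_pow_sum_div_mul_of_sum_mul_inv_pow_lt {ι : Type*} (U : Finset ι) {P z : ι → ℝ}
    (hP : ∀ i ∈ U, 0 ≤ P i) (hPU : 0 < ∑ i ∈ U, P i) (hz : ∀ i ∈ U, 0 < z i) (n : ℕ)
    {δ : ℝ} (hδ : 0 < δ) (h : ∑ i ∈ U, P i * (z i ^ n)⁻¹ < δ⁻¹) :
    δ * ∑ i ∈ U, P i < (∑ i ∈ U, P i / (∑ j ∈ U, P j) * z i) ^ n := by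
  set PU := ∑ i ∈ U, P i
  have hw0 : ∀ i ∈ U, 0 ≤ P i / PU := fun i hi => div_nonneg (hP i hi) hPU.le
  have hw1 : ∑ i ∈ U, P i / PU = 1 := by rw [← sum_div, div_self hPU.ne']
  have hy : 0 < ∑ i ∈ U, P i / PU * z i := by
    simpa using (convex_Ioi (0 : ℝ)).sum_mem hw0 hw1 hz
  have hjensen := (convexOn_zpow (𝕜 := ℝ) (-n)).map_sum_le hw0 hw1 hz
  simp only [smul_eq_mul, zpow_neg, zpow_natCast] at hjensen
  have : ((∑ i ∈ U, P i / PU * z i) ^ n)⁻¹ < (δ * PU)⁻¹ := calc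
    _ ≤ ∑ i ∈ U, P i / PU * (z i ^ n)⁻¹ := hjensen
    _ = (∑ i ∈ U, P i * (z i ^ n)⁻¹) / PU := by
      rw [sum_div]; exact sum_congr rfl fun i _ => by ring
    _ < δ⁻¹ / PU := by gcongr
    _ = (δ * PU)⁻¹ := by rw [mul_inv, div_eq_mul_inv]
  exact (inv_lt_inv₀ (pow_pos hy n) (by positivity)).1 this

theorem sum_posterior_mul_eq {ι : Type*} [Fintype ι] [DecidableEq ι] (U : Finset ι)
    (P ε : ι → ℝ) (hPU : ∑ i ∈ U, P i ≠ 0) :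
    ∑ i, (if i ∈ U then P i / ∑ j ∈ U, P j else 0) * ε i =
      1 - ∑ i ∈ U, P i / (∑ j ∈ U, P j) * (1 - ε i) := by
  simp only [ite_mul, zero_mul, sum_ite_mem, univ_inter, mul_one_sub, sum_sub_distrib,
    ← sum_div, div_self hPU]
  ring

theorem exp_neg_log_div_le_of_le_pow {a δ M y n : ℝ} (ha : 0 < a) (hδ : 0 < δ) (hM : 1 ≤ M)
    (hy : 0 ≤ y) (hn : 0 < n) (h : δ * a ≤ y ^ n) :
    Real.exp (-((Real.log (1 / a) + Real.log (M / δ)) / n)) ≤ y := by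
  have hlog : -(Real.log (1 / a) + Real.log (M / δ)) = Real.log (δ * a / M) := by
    rw [one_div, Real.log_inv, Real.log_div (by positivity) hδ.ne',
      Real.log_div (by positivity) (by positivity), Real.log_mul hδ.ne' ha.ne']
    ring
  rw [← neg_div, hlog, div_eq_mul_inv, ← Real.rpow_def_of_pos (by positivity),
    Real.rpow_inv_le_iff_of_pos (by positivity) hy hn]
  exact (div_le_self (by positivity) hM).trans h

theorem pac_bayes_realizable_inverted_general
    {X : Type*} [MeasurableSpace X] (D : Measure X) [IsProbabilityMeasure D]
    {H : Type*} [Fintype H] [DecidableEq H]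
    (h : H → X → Bool) (hMeas : ∀ c, Measurable (h c))
    (t : X → Bool) (ht : Measurable t)
    (c₀ : H) (hc₀ : h c₀ = t)
    (P : H → ℝ) (hP0 : ∀ c, 0 ≤ P c) (hP1 : ∑ c, P c = 1) (hreal : 0 < P c₀)
    (m : ℕ) (hm : 2 ≤ m)
    (δ : ℝ) (hδ0 : 0 < δ) :
    ENNReal.ofReal (1 - δ) ≤
      Measure.pi (fun _ : Fin m => D)
        {S : Fin m → X |
          -- the set of concepts consistent with the sample `S`
          let U : Finset H := univ.filter fun c => ∀ i : Fin m, h c (S i) = t (S i)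
          -- its total prior probability (the marginal likelihood of the data)
          let PU : ℝ := ∑ c ∈ U, P c
          -- the Bayesian posterior
          let Qstar : H → ℝ := fun c => if c ∈ U then P c / PU else 0
          -- its expected generalization error
          let eps : ℝ := ∑ c, Qstar c * (D {x | h c x ≠ t x}).toReal
          eps ≤ 1 - Real.exp (-((Real.log (1 / PU) + Real.log (2 * m / δ)) / ((m : ℝ) - 1)))} := by
  obtain ⟨n, rfl⟩ : ∃ n, m = n + 1 := ⟨m - 1, by omega⟩
  have hn : (0 : ℝ) < n := by exact_mod_cast (by omega : 0 < n)
  set A : H → Set X := fun c => {x | h c x = t x}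
  have hA : ∀ c, MeasurableSet (A c) := fun c => measurableSet_eq_fun (hMeas c) ht
  refine (ofReal_one_sub_le_measure_pi_consistent D hA hP0 hP1 n hδ0).trans (measure_mono ?_)
  rintro S ⟨hpos, hZ⟩
  rw [Set.mem_ofPred_eq]
  intro U PU Qstar eps
  have hU : ∀ c, c ∈ U ↔ ∀ k, S k ∈ A c := fun c => by simp [U, A]
  have hPU : 0 < PU :=
    hreal.trans_le (single_le_sum (fun c _ => hP0 c) ((hU c₀).2 fun k => by simp [A, hc₀]))
  have hZU : ∑ c ∈ U, P c * (D.real (A c) ^ n)⁻¹ < δ⁻¹ := by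
    convert hZ using 1
    simp [Set.indicator_apply, sum_filter, U, A]
  have hy := mul_lt_pow_sum_div_mul_of_sum_mul_inv_pow_lt U (fun c _ => hP0 c) hPU
    (fun c hc => hpos c ((hU c).1 hc)) n hδ0 hZU
  have hε : ∀ c, 1 - (D {x | h c x ≠ t x}).toReal = D.real (A c) := fun c => by
    rw [← measureReal_def, show {x | h c x ≠ t x} = (A c)ᶜ from rfl,
      probReal_compl_eq_one_sub (hA c), sub_sub_cancel]
  calc eps = 1 - ∑ c ∈ U, P c / PU * D.real (A c) := by
        simp only [← hε]
        exact sum_posterior_mul_eq U P _ hPU.ne'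
    _ ≤ _ := by
      rw [show ((n + 1 : ℕ) : ℝ) - 1 = n by push_cast; ring]
      gcongr
      refine exp_neg_log_div_le_of_le_pow hPU hδ0 (by push_cast; linarith)
        (sum_nonneg fun c _ => mul_nonneg (div_nonneg (hP0 c) hPU.le) measureReal_nonneg) hn ?_
      rw [Real.rpow_natCast]
      exact hy.le

/-- **Inverted (explicit) form of the realizable PAC-Bayes bound.** Assume the target
concept `t` is realized by some `c₀ ∈ H` with prior weight `P c₀ > 0`. Then with probability
at least `1 - δ` over an i.i.d. sample `S` of size `m ≥ 2` from `D`, the Bayesian posterior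
`Q*` satisfies `ε(Q*) ≤ 1 - exp(-(ln(1/P(U)) + ln(2m/δ)) / (m - 1))`. -/
theorem pac_bayes_realizable_inverted
    {X : Type*} [MeasurableSpace X] (D : Measure X) [IsProbabilityMeasure D]
    {H : Type*} [Fintype H] [DecidableEq H]
    (h : H → X → Bool) (hMeas : ∀ c, Measurable (h c))
    (t : X → Bool) (ht : Measurable t)
    (c₀ : H) (hc₀ : h c₀ = t)
    (P : H → ℝ) (hP0 : ∀ c, 0 ≤ P c) (hP1 : ∑ c, P c = 1) (hreal : 0 < P c₀)
    (m : ℕ) (hm : 2 ≤ m)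
    (δ : ℝ) (hδ0 : 0 < δ) (hδ1 : δ ≤ 1) :
    ENNReal.ofReal (1 - δ) ≤
      Measure.pi (fun _ : Fin m => D)
        {S : Fin m → X |
          -- the set of concepts consistent with the sample `S`
          let U : Finset H := univ.filter fun c => ∀ i : Fin m, h c (S i) = t (S i)
          -- its total prior probability (the marginal likelihood of the data)
          let PU : ℝ := ∑ c ∈ U, P c
          -- the Bayesian posterior
          let Qstar : H → ℝ := fun c => if c ∈ U then P c / PU else 0
          -- its expected generalization error
          let eps : ℝ := ∑ c, Qstar c * (D {x | h c x ≠ t x}).toReal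
          eps ≤ 1 - Real.exp (-((Real.log (1 / PU) + Real.log (2 * m / δ)) / ((m : ℝ) - 1)))} :=
  pac_bayes_realizable_inverted_general D h hMeas t ht c₀ hc₀ P hP0 hP1 hreal m hm δ hδ0
end

section
/- Weakened (McAllester-form) realizable PAC-Bayes bound: For any probability distribution P on a finite concept space H, any probability distribution D on the instance space X, any integer m ≥ 2, and any 0 < δ ≤ 1, assume realizability, i.e. the target concept t belongs to H and P(t) > 0. Then with probability at least 1 − δ over the choice of an i.i.d. sample S of m instances drawn from D, the Bayesian posterior Q* satisfies ε(Q*) ≤ (ln(1/P(U)) + ln(2m/δ))/(m − 1). (This follows from the realizable PAC-Bayes theorem via the inequality −ln(1 − x) ≥ x for x ∈ [0,1).) -/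
open MeasureTheory Finset

/-!
A concept of error `ε` survives `m` independent samples with probability
`(1 - ε)^m ≤ e^{-(m-1)ε}`, so the exponential moment
`W(S) = ∑_{c ∈ U(S)} P(c) e^{(m-1)ε(c)}` has expectation at most `∑ P = 1`, and by Markov
`W(S) < 1/δ` with probability at least `1 - δ`. On that event Jensen's inequality for `exp`
under the posterior gives `e^{(m-1)ε(Q*)} ≤ W(S)/P(U) < 1/(δ P(U))`; take logarithms.
-/

lemma pow_le_exp_nat_mul_sub_one {q : ℝ} (hq : 0 ≤ q) (n : ℕ) : q ^ n ≤ Real.exp (n * (q - 1)) := by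
  rw [Real.exp_nat_mul]
  exact pow_le_pow_left₀ hq (by linarith [Real.add_one_le_exp (q - 1)]) n

lemma pow_mul_exp_mul_one_sub_le_one {q : ℝ} (hq0 : 0 ≤ q) (hq1 : q ≤ 1) {n : ℕ} (hn : 1 ≤ n) :
    q ^ n * Real.exp ((n - 1) * (1 - q)) ≤ 1 := by
  have hpow : q ^ n ≤ Real.exp (((n - 1 : ℕ) : ℝ) * (q - 1)) :=
    (pow_le_pow_of_le_one hq0 hq1 (Nat.sub_le n 1)).trans (pow_le_exp_nat_mul_sub_one hq0 _)
  rw [Nat.cast_sub hn, Nat.cast_one] at hpow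
  calc q ^ n * Real.exp ((n - 1) * (1 - q))
      ≤ Real.exp ((n - 1) * (q - 1)) * Real.exp ((n - 1) * (1 - q)) := by gcongr
    _ = 1 := by rw [← Real.exp_add, ← Real.exp_zero]; ring_nf

lemma ofReal_one_sub_le_measure_lt_inv {Ω : Type*} [MeasurableSpace Ω] {μ : Measure Ω}
    [IsProbabilityMeasure μ] {f : Ω → ℝ} (hf : Measurable f)
    (hint : ∫⁻ ω, ENNReal.ofReal (f ω) ∂μ ≤ 1) {δ : ℝ} (hδ : 0 < δ) :
    ENNReal.ofReal (1 - δ) ≤ μ {ω | f ω < δ⁻¹} := by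
  have hmarkov : μ {ω | ENNReal.ofReal δ⁻¹ ≤ ENNReal.ofReal (f ω)} ≤ ENNReal.ofReal δ :=
    calc _ ≤ (∫⁻ ω, ENNReal.ofReal (f ω) ∂μ) / ENNReal.ofReal δ⁻¹ :=
          meas_ge_le_lintegral_div hf.ennreal_ofReal.aemeasurable
            (ENNReal.ofReal_pos.2 (inv_pos.2 hδ)).ne' ENNReal.ofReal_ne_top
      _ ≤ 1 / ENNReal.ofReal δ⁻¹ := by gcongr
      _ = ENNReal.ofReal δ := by rw [ENNReal.ofReal_inv_of_pos hδ, one_div, inv_inv]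
  have hcover : 1 ≤ μ {ω | f ω < δ⁻¹} + μ {ω | ENNReal.ofReal δ⁻¹ ≤ ENNReal.ofReal (f ω)} := by
    rw [← measure_univ (μ := μ)]
    refine (measure_mono fun ω _ => ?_).trans (measure_union_le _ _)
    rcases lt_or_ge (f ω) δ⁻¹ with hlt | hge
    exacts [Or.inl hlt, Or.inr (ENNReal.ofReal_le_ofReal hge)]
  rw [ENNReal.ofReal_sub _ hδ.le, ENNReal.ofReal_one, tsub_le_iff_right]
  exact hcover.trans (by gcongr)

lemma measure_pi_univ_pi_mul_exp_le_one {X : Type*} [MeasurableSpace X] (D : Measure X)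
    [IsProbabilityMeasure D] {A : Set X} (hA : MeasurableSet A) {m : ℕ} (hm : 1 ≤ m) :
    Measure.pi (fun _ : Fin m => D) (Set.univ.pi fun _ => A) *
      ENNReal.ofReal (Real.exp ((m - 1) * D.real Aᶜ)) ≤ 1 := by
  rw [Measure.pi_pi, prod_const, card_univ, Fintype.card_fin, probReal_compl_eq_one_sub hA,
    ← ofReal_measureReal (measure_ne_top D A), ← ENNReal.ofReal_pow measureReal_nonneg,
    ← ENNReal.ofReal_mul (by positivity)]
  exact ENNReal.ofReal_le_one.2
    (pow_mul_exp_mul_one_sub_le_one measureReal_nonneg measureReal_le_one hm)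

section Classifiers

variable {X H : Type*} [Fintype H] (h : H → X → Bool) (t : X → Bool)

def consistentSet {m : ℕ} (S : Fin m → X) : Finset H :=
  univ.filter fun c => ∀ i, h c (S i) = t (S i)

def genError [MeasurableSpace X] (D : Measure X) (c : H) : ℝ :=
  (D {x | h c x ≠ t x}).toReal

variable {h t}

lemma sum_consistentSet_eq_sum_indicator {M : Type*} [AddCommMonoid M] {m : ℕ} (S : Fin m → X)
    (w : H → M) :
    ∑ c ∈ consistentSet h t S, w c =
      ∑ c, (Set.univ.pi fun _ => {x | h c x = t x}).indicator (fun _ => w c) S := by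
  classical
  rw [consistentSet, sum_filter]
  refine sum_congr rfl fun c _ => ?_
  simp [Set.indicator_apply]

variable [MeasurableSpace X]

lemma measurable_sum_consistentSet (hh : ∀ c, Measurable (h c)) (ht : Measurable t) {m : ℕ}
    (w : H → ℝ) : Measurable fun S : Fin m → X => ∑ c ∈ consistentSet h t S, w c := by
  simp_rw [sum_consistentSet_eq_sum_indicator]
  exact Finset.measurable_sum _ fun c _ =>
    measurable_const.indicator (.univ_pi fun _ => measurableSet_eq_fun (hh c) ht)

lemma lintegral_sum_consistentSet_le (hh : ∀ c, Measurable (h c)) (ht : Measurable t)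
    (D : Measure X) [IsProbabilityMeasure D] {m : ℕ} (hm : 1 ≤ m) {P : H → ℝ} (hP : ∀ c, 0 ≤ P c) :
    ∫⁻ S, ENNReal.ofReal (∑ c ∈ consistentSet h t S, P c * Real.exp ((m - 1) * genError h t D c))
        ∂Measure.pi (fun _ : Fin m => D) ≤ ENNReal.ofReal (∑ c, P c) := by
  have hE : ∀ c, MeasurableSet (Set.univ.pi fun _ : Fin m => {x | h c x = t x}) := fun c =>
    .univ_pi fun _ => measurableSet_eq_fun (hh c) ht
  simp_rw [ENNReal.ofReal_sum_of_nonneg fun c _ => hP c,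
    ENNReal.ofReal_sum_of_nonneg fun c _ => mul_nonneg (hP c) (Real.exp_nonneg _),
    sum_consistentSet_eq_sum_indicator]
  rw [lintegral_finsetSum _ fun c _ => measurable_const.indicator (hE c)]
  refine sum_le_sum fun c _ => ?_
  rw [lintegral_indicator_const (hE c), ENNReal.ofReal_mul (hP c), mul_assoc,
    mul_comm (ENNReal.ofReal (Real.exp _))]
  calc _ ≤ ENNReal.ofReal (P c) * 1 := by
        gcongr
        exact measure_pi_univ_pi_mul_exp_le_one D (measurableSet_eq_fun (hh c) ht) hm
    _ = ENNReal.ofReal (P c) := mul_one _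

end Classifiers

section Posterior

variable {H : Type*} [Fintype H] [DecidableEq H]

noncomputable def posterior (P : H → ℝ) (U : Finset H) (c : H) : ℝ :=
  if c ∈ U then P c / ∑ c ∈ U, P c else 0

lemma sum_posterior_mul (P f : H → ℝ) (U : Finset H) :
    ∑ c, posterior P U c * f c = ∑ c ∈ U, P c / (∑ c ∈ U, P c) * f c := by
  simp only [posterior, ite_mul, zero_mul, sum_ite_mem, univ_inter]

variable {P : H → ℝ} {U : Finset H}

lemma exp_sum_posterior_mul_le (hP : ∀ c ∈ U, 0 ≤ P c) (hPU : 0 < ∑ c ∈ U, P c) (f : H → ℝ) :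
    Real.exp (∑ c, posterior P U c * f c) ≤ (∑ c ∈ U, P c * Real.exp (f c)) / ∑ c ∈ U, P c := by
  have hjensen := convexOn_exp.map_sum_le (t := U) (w := fun c => P c / ∑ c ∈ U, P c) (p := f)
    (fun c hc => div_nonneg (hP c hc) hPU.le) (by rw [← sum_div, div_self hPU.ne'])
    (fun _ _ => Set.mem_univ _)
  rw [sum_posterior_mul, sum_div]
  simpa only [smul_eq_mul, div_mul_eq_mul_div] using hjensen

lemma sum_posterior_mul_le_of_sum_mul_exp_le (hP : ∀ c ∈ U, 0 ≤ P c) (hPU : 0 < ∑ c ∈ U, P c)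
    {ε : H → ℝ} {l B : ℝ} (hl : 0 < l) (hB : ∑ c ∈ U, P c * Real.exp (l * ε c) ≤ B) :
    ∑ c, posterior P U c * ε c ≤ (Real.log (1 / ∑ c ∈ U, P c) + Real.log B) / l := by
  have hexp : Real.exp (l * ∑ c, posterior P U c * ε c) ≤ B / ∑ c ∈ U, P c := by
    have := exp_sum_posterior_mul_le hP hPU fun c => l * ε c
    rw [mul_sum]
    simp_rw [mul_left_comm l]
    exact this.trans (by gcongr)
  have hBPU : 0 < B / ∑ c ∈ U, P c := (Real.exp_pos _).trans_le hexp
  have hB0 : 0 < B := by simpa [hPU] using (div_pos_iff_of_pos_right hPU).1 hBPU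
  rw [le_div_iff₀ hl, mul_comm, ← Real.log_mul (by positivity) hB0.ne', one_div_mul_eq_div]
  exact (Real.le_log_iff_exp_le hBPU).2 hexp

end Posterior

theorem pac_bayes_realizable_mcallester_general
    {X : Type*} [MeasurableSpace X] (D : Measure X) [IsProbabilityMeasure D]
    {H : Type*} [Fintype H] [DecidableEq H]
    (h : H → X → Bool) (hMeas : ∀ c, Measurable (h c))
    (t : X → Bool) (ht : Measurable t)
    (c₀ : H) (hc₀ : h c₀ = t)
    (P : H → ℝ) (hP0 : ∀ c, 0 ≤ P c) (hP1 : ∑ c, P c = 1) (hreal : 0 < P c₀)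
    (m : ℕ) (hm : 2 ≤ m)
    (δ : ℝ) (hδ0 : 0 < δ) :
    ENNReal.ofReal (1 - δ) ≤
      Measure.pi (fun _ : Fin m => D)
        {S : Fin m → X |
          -- the set of concepts consistent with the sample `S`
          let U : Finset H := univ.filter fun c => ∀ i : Fin m, h c (S i) = t (S i)
          -- its total prior probability (the marginal likelihood of the data)
          let PU : ℝ := ∑ c ∈ U, P c
          -- the Bayesian posterior
          let Qstar : H → ℝ := fun c => if c ∈ U then P c / PU else 0
          -- its expected generalization error
          let eps : ℝ := ∑ c, Qstar c * (D {x | h c x ≠ t x}).toReal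
          eps ≤ (Real.log (1 / PU) + Real.log (2 * m / δ)) / ((m : ℝ) - 1)} := by
  have hm1 : (0 : ℝ) < m - 1 := by
    have : (2 : ℝ) ≤ m := by exact_mod_cast hm
    linarith
  have hmoment : ∫⁻ S, ENNReal.ofReal (∑ c ∈ consistentSet h t S,
      P c * Real.exp ((m - 1) * genError h t D c)) ∂Measure.pi (fun _ : Fin m => D) ≤ 1 := by
    simpa [hP1] using lintegral_sum_consistentSet_le hMeas ht D (by omega) hP0
  refine (ofReal_one_sub_le_measure_lt_inv (measurable_sum_consistentSet hMeas ht _) hmoment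
    hδ0).trans (measure_mono fun S hS => ?_)
  have hc₀U : c₀ ∈ consistentSet h t S := by simp [consistentSet, hc₀]
  have hPU : 0 < ∑ c ∈ consistentSet h t S, P c :=
    hreal.trans_le (single_le_sum (fun c _ => hP0 c) hc₀U)
  have hlog : Real.log δ⁻¹ ≤ Real.log (2 * m / δ) := by
    refine Real.log_le_log (inv_pos.2 hδ0) ?_
    rw [inv_eq_one_div]
    gcongr
    linarith [hm1]
  exact (sum_posterior_mul_le_of_sum_mul_exp_le (fun c _ => hP0 c) hPU hm1 hS.le).trans
    (div_le_div_of_nonneg_right (add_le_add le_rfl hlog) hm1.le)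

/-- **Weakened (McAllester-form) realizable PAC-Bayes bound.** Assume the target concept
`t` is realized by some `c₀ ∈ H` with prior weight `P c₀ > 0`. Then with probability at
least `1 - δ` over an i.i.d. sample `S` of size `m ≥ 2` from `D`, the Bayesian posterior
`Q*` satisfies `ε(Q*) ≤ (ln(1/P(U)) + ln(2m/δ)) / (m - 1)`. -/
theorem pac_bayes_realizable_mcallester
    {X : Type*} [MeasurableSpace X] (D : Measure X) [IsProbabilityMeasure D]
    {H : Type*} [Fintype H] [DecidableEq H]
    (h : H → X → Bool) (hMeas : ∀ c, Measurable (h c))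
    (t : X → Bool) (ht : Measurable t)
    (c₀ : H) (hc₀ : h c₀ = t)
    (P : H → ℝ) (hP0 : ∀ c, 0 ≤ P c) (hP1 : ∑ c, P c = 1) (hreal : 0 < P c₀)
    (m : ℕ) (hm : 2 ≤ m)
    (δ : ℝ) (hδ0 : 0 < δ) (hδ1 : δ ≤ 1) :
    ENNReal.ofReal (1 - δ) ≤
      Measure.pi (fun _ : Fin m => D)
        {S : Fin m → X |
          -- the set of concepts consistent with the sample `S`
          let U : Finset H := univ.filter fun c => ∀ i : Fin m, h c (S i) = t (S i)
          -- its total prior probability (the marginal likelihood of the data)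
          let PU : ℝ := ∑ c ∈ U, P c
          -- the Bayesian posterior
          let Qstar : H → ℝ := fun c => if c ∈ U then P c / PU else 0
          -- its expected generalization error
          let eps : ℝ := ∑ c, Qstar c * (D {x | h c x ≠ t x}).toReal
          eps ≤ (Real.log (1 / PU) + Real.log (2 * m / δ)) / ((m : ℝ) - 1)} :=
  pac_bayes_realizable_mcallester_general D h hMeas t ht c₀ hc₀ P hP0 hP1 hreal m hm δ hδ0
end
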